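/- arXiv:2412.17115 — 5 statements merged into one kernel-verified Lean document; each statement's English description precedes it below -/
import Mathlib

section
/- There is a universal constant C > 0 such that the following holds. Let G = Cay(Γ, S) be a connected Abelian Cayley graph on n = |Γ| vertices with generating multiset S of size d, and let λ_2 > 0 be the second-smallest eigenvalue of its normalized Laplacian L. Then for every real τ with λ_2 ≤ τ ≤ 3/2, the number mul_τ(G) of eigenvalues of L that are at most τ satisfies mul_τ(G) ≤ (C·τ/λ_2)^{20d}. -/
open Matrix

/-- Normalized adjacency matrix of the Abelian Cayley graph `Cay(Γ, S)`:
`A x y = (multiplicity of `y - x` in `S`) / |S|`. -/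
noncomputable def cayleyAdj {Γ : Type*} [AddCommGroup Γ] [Fintype Γ] [DecidableEq Γ]
    (S : Multiset Γ) : Matrix Γ Γ ℝ :=
  Matrix.of fun x y => (S.count (y - x) : ℝ) / (Multiset.card S : ℝ)

/-- Normalized Laplacian `L = I - A` of the Abelian Cayley graph `Cay(Γ, S)`. -/
noncomputable def cayleyLap {Γ : Type*} [AddCommGroup Γ] [Fintype Γ] [DecidableEq Γ]
    (S : Multiset Γ) : Matrix Γ Γ ℝ :=
  1 - cayleyAdj S

/-- Sorted (nondecreasing) list of eigenvalues of a matrix, with multiplicity,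
realized as the roots of its characteristic polynomial. -/
noncomputable def eigList {Γ : Type*} [Fintype Γ] [DecidableEq Γ] (M : Matrix Γ Γ ℝ) : List ℝ :=
  Multiset.sort M.charpoly.roots (· ≤ ·)

/-- The `i`-th smallest eigenvalue (0-indexed, with multiplicity); `eig M 1 = λ₂`. -/
noncomputable def eig {Γ : Type*} [Fintype Γ] [DecidableEq Γ] (M : Matrix Γ Γ ℝ) (i : ℕ) : ℝ :=
  (eigList M).getD i 0

/-- `mul_τ`: the number of eigenvalues (with multiplicity) that are at most `τ`. -/
noncomputable def mulBelow {Γ : Type*} [Fintype Γ] [DecidableEq Γ]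
    (M : Matrix Γ Γ ℝ) (τ : ℝ) : ℕ :=
  Multiset.card (M.charpoly.roots.filter (fun x => x ≤ τ))

/-
The characters `ψ` of `Γ` form an eigenbasis of `L`, the eigenvalue of `ψ` being
`λ(ψ) = 1 - (1/d) ∑_{s ∈ S} Re ψ(s)`. Sending `ψ` to `(ψ(s))_{s ∈ S} ∈ ℂ^S ≅ ℝ^{2d}` turns
squared distances into `2d · λ(ψ φ⁻¹)`. As `λ(χ) ≥ λ₂` for `χ ≠ 1`, the characters with
`λ(ψ) ≤ τ` are `√(2dλ₂)`-separated points of the ball of radius `√(2dτ)` around the image of the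
trivial character, and comparing volumes bounds their number by
`(1 + 2√(τ/λ₂))^{2d} ≤ (9τ/λ₂)^d`.
-/

open MeasureTheory Metric Polynomial

lemma card_le_of_separated_of_dist_le {E : Type*} [NormedAddCommGroup E] [NormedSpace ℝ E]
    [FiniteDimensional ℝ E] {ι : Type*} (T : Finset ι) (x : ι → E) (c : E) {r R : ℝ}
    (hr : 0 < r) (hR : 0 ≤ R)
    (hsep : ∀ i ∈ T, ∀ j ∈ T, i ≠ j → r ≤ dist (x i) (x j))
    (hball : ∀ i ∈ T, dist (x i) c ≤ R) :
    (T.card : ℝ) ≤ ((2 * R + r) / r) ^ Module.finrank ℝ E := by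
  borelize E
  set μ : Measure E := Measure.addHaar
  have hdisj : (T : Set ι).PairwiseDisjoint fun i => ball (x i) (r / 2) :=
    fun i hi j hj hij => ball_disjoint_ball (by linarith [hsep i hi j hj hij])
  have hsub : (⋃ i ∈ T, ball (x i) (r / 2)) ⊆ ball c (R + r / 2) := by
    simp only [Set.iUnion_subset_iff]
    intro i hi y hy
    exact mem_ball.2
      ((dist_triangle y (x i) c).trans_lt (by linarith [mem_ball.1 hy, hball i hi]))
  have hvol : T.card * μ (ball 0 (r / 2)) ≤ μ (ball 0 (R + r / 2)) := by
    calc T.card * μ (ball 0 (r / 2)) = ∑ i ∈ T, μ (ball (x i) (r / 2)) := by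
          simp [Measure.addHaar_ball_center]
      _ = μ (⋃ i ∈ T, ball (x i) (r / 2)) :=
          (measure_biUnion_finset hdisj fun i _ => measurableSet_ball).symm
      _ ≤ μ (ball c (R + r / 2)) := measure_mono hsub
      _ = μ (ball 0 (R + r / 2)) := Measure.addHaar_ball_center μ c _
  rw [Measure.addHaar_ball_of_pos μ 0 (r := r / 2) (by positivity),
    Measure.addHaar_ball_of_pos μ 0 (r := R + r / 2) (by positivity),
    ← mul_assoc,
    ENNReal.mul_le_mul_iff_left (measure_ball_pos μ 0 one_pos).ne' measure_ball_lt_top.ne,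
    ← ENNReal.ofReal_natCast, ← ENNReal.ofReal_mul (by positivity),
    ENNReal.ofReal_le_ofReal_iff (by positivity), ← le_div_iff₀ (by positivity), ← div_pow] at hvol
  rwa [show (R + r / 2) / (r / 2) = (2 * R + r) / r by field_simp] at hvol

lemma LinearMap.charpoly_eq_prod_of_basis_eigen {R M ι : Type*} [CommRing R] [Nontrivial R]
    [AddCommGroup M] [Module R M] [Module.Free R M] [Module.Finite R M] [Fintype ι] [DecidableEq ι]
    (f : M →ₗ[R] M) (b : Module.Basis ι R M) (d : ι → R) (h : ∀ i, f (b i) = d i • b i) :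
    f.charpoly = ∏ i, (X - C (d i)) := by
  have : LinearMap.toMatrix b b f = Matrix.diagonal d := by
    ext i j
    rcases eq_or_ne i j with rfl | hij <;> simp [LinearMap.toMatrix_apply, *]
  rw [← f.charpoly_toMatrix b, this, Matrix.charpoly_diagonal]

lemma Multiset.getD_sort_one_le_max {α : Type*} [LinearOrder α] {m : Multiset α} {a b : α}
    (hab : {a, b} ≤ m) (x : α) : (m.sort (· ≤ ·)).getD 1 x ≤ max a b := by
  have hcard : 2 ≤ (m.sort (· ≤ ·)).length := by
    simpa [Multiset.length_sort] using Multiset.card_le_card hab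
  have hm := Multiset.sort_eq m (· ≤ ·)
  match hl : m.sort (· ≤ ·), Multiset.pairwise_sort m (· ≤ ·), hcard with
  | x₀ :: x₁ :: t, hsorted, _ =>
    have hx₁ : ∀ y ∈ (↑(x₁ :: t) : Multiset α), x₁ ≤ y := by
      simp only [Multiset.mem_coe, List.mem_cons]
      rintro y (rfl | hy)
      exacts [le_rfl, (List.pairwise_cons.1 (List.pairwise_cons.1 hsorted).2).1 y hy]
    rw [hl, ← Multiset.cons_coe] at hm
    rw [← hm] at hab
    -- removing one copy of `x₀` from `m` leaves `a` or `b` behind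
    have hab' : a ∈ (↑(x₁ :: t) : Multiset α) ∨ b ∈ (↑(x₁ :: t) : Multiset α) := by
      by_cases ha : a = x₀
      · subst ha
        exact Or.inr (Multiset.singleton_le.1 ((Multiset.cons_le_cons_iff _).1 hab))
      · refine Or.inl ((Multiset.mem_cons.1 ?_).resolve_left ha)
        exact Multiset.mem_of_le hab (Multiset.mem_cons_self _ _)
    rcases hab' with h | h
    exacts [(hx₁ a h).trans (le_max_left a b), (hx₁ b h).trans (le_max_right a b)]

lemma finrank_real_euclideanSpace_complex (ι : Type*) [Fintype ι] :
    Module.finrank ℝ (EuclideanSpace ℂ ι) = 2 * Fintype.card ι := by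
  rw [← Module.finrank_mul_finrank ℝ ℂ, Complex.finrank_real_complex, finrank_euclideanSpace]

lemma Multiset.sum_map_eq_sum_count_nsmul {α M : Type*} [Fintype α] [DecidableEq α]
    [AddCommMonoid M] (m : Multiset α) (f : α → M) :
    (m.map f).sum = ∑ a, m.count a • f a := by
  rw [Finset.sum_multiset_map_count]
  exact Finset.sum_subset (Finset.subset_univ _) fun a _ ha => by
    simp [Multiset.count_eq_zero.2 (by simpa using ha)]

lemma Multiset.sum_coe_sort_eq_sum_map {α M : Type*} [DecidableEq α] [AddCommMonoid M]
    (m : Multiset α) (f : α → M) : ∑ a : m, f a = (m.map f).sum := by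
  rw [Finset.sum_eq_multiset_sum, Multiset.map_univ]

lemma Multiset.map_neg_eq_self {α : Type*} [AddGroup α] [DecidableEq α] {m : Multiset α}
    (hm : ∀ a, m.count (-a) = m.count a) : m.map Neg.neg = m := by
  ext a
  simpa [hm a] using Multiset.count_map_eq_count' Neg.neg m neg_injective (-a)

lemma AddChar.dist_apply_sq {G : Type*} [AddCommGroup G] [Finite G] (ψ φ : AddChar G ℂ) (a : G) :
    dist (ψ a) (φ a) ^ 2 = 2 - 2 * ((ψ * φ⁻¹) a).re := by
  rw [dist_eq_norm, Complex.sq_norm, Complex.normSq_sub, Complex.normSq_eq_norm_sq,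
    Complex.normSq_eq_norm_sq, AddChar.norm_apply, AddChar.norm_apply, AddChar.mul_apply,
    AddChar.inv_apply, AddChar.map_neg_eq_conj]
  ring

section Cayley

open scoped Finset

variable {Γ : Type*} [AddCommGroup Γ]

noncomputable def cayleyEigenvalue (S : Multiset Γ) (ψ : AddChar Γ ℂ) : ℝ :=
  1 - (S.map fun s => (ψ s).re).sum / Multiset.card S

variable {S : Multiset Γ}

lemma cayleyEigenvalue_one (hS : S ≠ 0) : cayleyEigenvalue S 1 = 0 := by
  have : (Multiset.card S : ℝ) ≠ 0 := by simpa using hS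
  simp [cayleyEigenvalue, this]

variable [Fintype Γ] [DecidableEq Γ]

variable (S) in
noncomputable def charEmbedding (ψ : AddChar Γ ℂ) : EuclideanSpace ℂ S :=
  WithLp.toLp 2 fun s => ψ s

lemma dist_charEmbedding_sq (ψ φ : AddChar Γ ℂ) :
    dist (charEmbedding S ψ) (charEmbedding S φ) ^ 2
      = 2 * Multiset.card S * cayleyEigenvalue S (ψ * φ⁻¹) := by
  rw [EuclideanSpace.dist_eq, Real.sq_sqrt (by positivity)]
  calc ∑ s : S, dist (ψ s) (φ s) ^ 2 = ∑ s : S, (2 - 2 * ((ψ * φ⁻¹) s).re) := by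
        simp only [AddChar.dist_apply_sq]
    _ = (S.map fun s => 2 - 2 * ((ψ * φ⁻¹) s).re).sum :=
        Multiset.sum_coe_sort_eq_sum_map S fun s => 2 - 2 * ((ψ * φ⁻¹) s).re
    _ = 2 * Multiset.card S * cayleyEigenvalue S (ψ * φ⁻¹) := by
        rcases eq_or_ne S 0 with rfl | hS
        · simp
        · have : (Multiset.card S : ℝ) ≠ 0 := by simpa using hS
          simp only [cayleyEigenvalue, Multiset.sum_map_sub, Multiset.map_const',
            Multiset.sum_replicate, nsmul_eq_mul, Multiset.sum_map_mul_left]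
          field_simp

lemma cayleyEigenvalue_nonneg (hS : S ≠ 0) (ψ : AddChar Γ ℂ) : 0 ≤ cayleyEigenvalue S ψ := by
  have h := dist_charEmbedding_sq (S := S) ψ 1
  rw [inv_one, mul_one] at h
  have hd : (0 : ℝ) < 2 * Multiset.card S := by simpa [Multiset.card_pos] using hS
  exact (mul_nonneg_iff_of_pos_left hd).1 (h ▸ sq_nonneg _)

lemma sum_map_addChar_eq_ofReal (hsym : ∀ x : Γ, S.count (-x) = S.count x)
    (ψ : AddChar Γ ℂ) :
    (S.map ψ).sum = ((S.map fun s => (ψ s).re).sum : ℝ) := by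
  have hconj : starRingEnd ℂ (S.map ψ).sum = (S.map ψ).sum := by
    conv_rhs => rw [← Multiset.map_neg_eq_self hsym, Multiset.map_map]
    simp [map_multiset_sum, Multiset.map_map, AddChar.map_neg_eq_conj]
  rw [← Complex.conj_eq_iff_re.1 hconj]
  simpa [Multiset.map_map] using
    congrArg ((↑) : ℝ → ℂ) (map_multiset_sum Complex.reAddGroupHom (S.map ψ))

lemma cayleyAdj_mulVec_addChar (ψ : AddChar Γ ℂ) :
    (cayleyAdj S).map (algebraMap ℝ ℂ) *ᵥ ⇑ψ = ((S.map ψ).sum / Multiset.card S) • ⇑ψ := by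
  ext x
  simp only [Matrix.mulVec, dotProduct, Matrix.map_apply, cayleyAdj, Matrix.of_apply,
    Pi.smul_apply, smul_eq_mul]
  push_cast
  calc ∑ y, (S.count (y - x) / Multiset.card S : ℂ) * ψ y
      = ∑ w, (S.count w / Multiset.card S : ℂ) * ψ (x + w) :=
        (Fintype.sum_equiv (Equiv.addLeft x) _ _ fun w => by simp).symm
    _ = (S.map ψ).sum / Multiset.card S * ψ x := by
        simp only [AddChar.map_add_eq_mul, Multiset.sum_map_eq_sum_count_nsmul, nsmul_eq_mul,
          Finset.sum_div, Finset.sum_mul]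
        exact Finset.sum_congr rfl fun w _ => by ring

lemma cayleyLap_mulVec_addChar (hsym : ∀ x : Γ, S.count (-x) = S.count x) (ψ : AddChar Γ ℂ) :
    (cayleyLap S).map (algebraMap ℝ ℂ) *ᵥ ⇑ψ = (cayleyEigenvalue S ψ : ℂ) • ⇑ψ := by
  rw [cayleyLap, Matrix.map_sub _ (map_sub _), Matrix.map_one _ (map_zero _) (map_one _),
    Matrix.sub_mulVec, Matrix.one_mulVec, cayleyAdj_mulVec_addChar, sum_map_addChar_eq_ofReal hsym,
    cayleyEigenvalue]
  push_cast
  rw [sub_smul, one_smul]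

theorem charpoly_cayleyLap (hsym : ∀ x : Γ, S.count (-x) = S.count x) :
    (cayleyLap S).charpoly = ∏ ψ : AddChar Γ ℂ, (X - C (cayleyEigenvalue S ψ)) := by
  apply Polynomial.map_injective (algebraMap ℝ ℂ) (algebraMap ℝ ℂ).injective
  have heigen (ψ : AddChar Γ ℂ) :
      ((cayleyLap S).map (algebraMap ℝ ℂ)).toLin' (AddChar.complexBasis Γ ψ)
        = (cayleyEigenvalue S ψ : ℂ) • AddChar.complexBasis Γ ψ := by
    simpa [AddChar.complexBasis_apply] using cayleyLap_mulVec_addChar hsym ψ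
  rw [← Matrix.charpoly_map, ← Matrix.charpoly_toLin',
    LinearMap.charpoly_eq_prod_of_basis_eigen _ _ _ heigen]
  simp [Polynomial.map_prod]

theorem roots_charpoly_cayleyLap (hsym : ∀ x : Γ, S.count (-x) = S.count x) :
    (cayleyLap S).charpoly.roots = Finset.univ.val.map (cayleyEigenvalue S) := by
  rw [charpoly_cayleyLap hsym, Polynomial.roots_prod _ _ (by
    simp [Finset.prod_ne_zero_iff, Polynomial.X_sub_C_ne_zero])]
  simp

theorem mulBelow_cayleyLap (hsym : ∀ x : Γ, S.count (-x) = S.count x) (τ : ℝ) :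
    mulBelow (cayleyLap S) τ = #{ψ : AddChar Γ ℂ | cayleyEigenvalue S ψ ≤ τ} := by
  rw [mulBelow, roots_charpoly_cayleyLap hsym, Multiset.filter_map, Multiset.card_map]
  rfl

theorem eig_cayleyLap_one_le (hS : S ≠ 0) (hsym : ∀ x : Γ, S.count (-x) = S.count x)
    {χ : AddChar Γ ℂ} (hχ : χ ≠ 1) : eig (cayleyLap S) 1 ≤ cayleyEigenvalue S χ := by
  have hle : {cayleyEigenvalue S 1, cayleyEigenvalue S χ} ≤ (cayleyLap S).charpoly.roots := by
    rw [roots_charpoly_cayleyLap hsym]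
    have : ({1, χ} : Multiset (AddChar Γ ℂ)) ≤ Finset.univ.val :=
      (Multiset.le_iff_subset (by simp [Ne.symm hχ])).2 (by simp)
    simpa using Multiset.map_le_map (f := cayleyEigenvalue S) this
  calc eig (cayleyLap S) 1 ≤ max (cayleyEigenvalue S 1) (cayleyEigenvalue S χ) :=
        Multiset.getD_sort_one_le_max hle 0
    _ = cayleyEigenvalue S χ := by
        rw [cayleyEigenvalue_one hS, max_eq_right (cayleyEigenvalue_nonneg hS χ)]

theorem card_cayleyEigenvalue_le (hS : S ≠ 0) (hsym : ∀ x : Γ, S.count (-x) = S.count x)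
    (hpos : 0 < eig (cayleyLap S) 1) {τ : ℝ} (hτ : eig (cayleyLap S) 1 ≤ τ) :
    (#{ψ : AddChar Γ ℂ | cayleyEigenvalue S ψ ≤ τ} : ℝ)
      ≤ (9 * τ / eig (cayleyLap S) 1) ^ Multiset.card S := by
  set l := eig (cayleyLap S) 1
  set q := τ / l
  have hq : 1 ≤ q := (one_le_div hpos).2 hτ
  have hd : (0 : ℝ) < Multiset.card S := by simpa [Multiset.card_pos] using hS
  set r := √(2 * Multiset.card S * l)
  have hr : 0 < r := by positivity
  have hsep (ψ φ : AddChar Γ ℂ) (hψφ : ψ ≠ φ) :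
      r ≤ dist (charEmbedding S ψ) (charEmbedding S φ) := by
    rw [← Real.sqrt_sq dist_nonneg, dist_charEmbedding_sq]
    exact Real.sqrt_le_sqrt (mul_le_mul_of_nonneg_left
      (eig_cayleyLap_one_le hS hsym (by rwa [Ne, mul_inv_eq_one])) (by positivity))
  have hball (ψ : AddChar Γ ℂ) (hψ : cayleyEigenvalue S ψ ≤ τ) :
      dist (charEmbedding S ψ) (charEmbedding S 1) ≤ √q * r := by
    have hqr : q * (2 * Multiset.card S * l) = 2 * Multiset.card S * τ := by
      simp only [q]
      field_simp
    rw [← Real.sqrt_mul (by positivity), hqr, ← Real.sqrt_sq dist_nonneg, dist_charEmbedding_sq,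
      inv_one, mul_one]
    exact Real.sqrt_le_sqrt (mul_le_mul_of_nonneg_left hψ (by positivity))
  calc _ ≤ ((2 * (√q * r) + r) / r) ^ Module.finrank ℝ (EuclideanSpace ℂ S) :=
        card_le_of_separated_of_dist_le _ (charEmbedding S) (charEmbedding S 1) hr (by positivity)
          (fun ψ _ φ _ => hsep ψ φ) fun ψ hψ => hball ψ (Finset.mem_filter.1 hψ).2
    _ = (2 * √q + 1) ^ (2 * Multiset.card S) := by
        rw [finrank_real_euclideanSpace_complex, Multiset.card_coe]
        field_simp
    _ ≤ (3 * √q) ^ (2 * Multiset.card S) := by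
        gcongr
        linarith [Real.one_le_sqrt.2 hq]
    _ = (9 * τ / l) ^ Multiset.card S := by
        rw [pow_mul, mul_pow, Real.sq_sqrt (by positivity)]
        ring

end Cayley

/-- There is a universal constant `C > 0` such that for every connected
Abelian Cayley graph `G = Cay(Γ, S)` with generating multiset `S` of size `d`
(symmetric: `x` and `-x` have the same multiplicity), with second-smallest normalized
Laplacian eigenvalue `λ₂ > 0`, and every `τ` with `λ₂ ≤ τ ≤ 3/2`, one has
`mul_τ(G) ≤ (C·τ/λ₂)^(20 d)`. -/
theorem sparsestCut_eigenvalue_multiplicity_bound :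
    ∃ C : ℝ, 0 < C ∧
      ∀ (Γ : Type) (_ : AddCommGroup Γ) (_ : Fintype Γ) (_ : DecidableEq Γ)
        (S : Multiset Γ),
        S ≠ 0 →
        (∀ x : Γ, S.count (-x) = S.count x) →
        0 < eig (cayleyLap S) 1 →
        ∀ τ : ℝ, eig (cayleyLap S) 1 ≤ τ → τ ≤ 3 / 2 →
          (mulBelow (cayleyLap S) τ : ℝ)
            ≤ (C * τ / eig (cayleyLap S) 1) ^ (20 * Multiset.card S) := by
  refine ⟨9, by norm_num, fun Γ _ _ _ S hS hsym hpos τ hτ _ => ?_⟩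
  have hbase : 1 ≤ 9 * τ / eig (cayleyLap S) 1 := by
    rw [le_div_iff₀ hpos]
    linarith
  rw [mulBelow_cayleyLap hsym]
  exact (card_cayleyEigenvalue_le hS hsym hpos hτ).trans (pow_le_pow_right₀ hbase (by omega))
end

section
/- Let d ≥ 1 and t ≥ 0 be integers, and let μ, c : {1, …, d} → ℕ satisfy Σ_{i=1}^d μ_i = Σ_{i=1}^d c_i = 2t and |μ_i − μ_j| ≤ 1 for all i, j. Then (2t)! · d^{2t} · Π_{i=1}^d (c_i + μ_i)! ≤ (2e)^d · (4t)! · Π_{i=1}^d c_i!. Equivalently, for the multinomial random variables C^{(2t)} and C^{(4t)} recording the counts of 2t (respectively 4t) i.i.d. uniform draws from {1,…,d}, Pr(C^{(2t)} = c) ≤ (2e)^d · Pr(C^{(4t)} = c + μ). -/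
/-!
Coordinatewise, `c ↦ (c + m)! / (2 ^ c * c!)` increases up to `c = m` and decreases afterwards,
so Stirling's bounds give `(c + m)! ≤ √2 · 2 ^ (c + m) · (m / e) ^ m · c!`. A balanced `μ` has
`μᵢ ≤ λ + 1` for its mean `λ = 2t / d`, and then `log x ≤ x - 1` gives `(μᵢ / λ) ^ μᵢ ≤ e ^ (μᵢ / λ)`,
so the product of the `(μᵢ / e) ^ μᵢ` is at most `e ^ d (λ / e) ^ (2t)`. What is left,
`16 ^ t (2t / e) ^ (2t) (2t)! ≤ (4t)!`, is Stirling once more.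
-/
open Real Finset
open scoped Nat

lemma Real.exp_one_le_two_mul_sqrt_pi : exp 1 ≤ 2 * √π := by
  rw [show 2 * √π = √(4 * π) by rw [sqrt_mul (by norm_num), show (4:ℝ) = 2 ^ 2 by norm_num,
    sqrt_sq (by norm_num)], le_sqrt (exp_pos 1).le (by positivity)]
  nlinarith [exp_one_lt_d9, pi_gt_three, exp_pos 1]

namespace Stirling

lemma factorial_le_exp_one_mul_sqrt {n : ℕ} (hn : n ≠ 0) :
    (n ! : ℝ) ≤ exp 1 * √n * (n / exp 1) ^ n := by
  obtain ⟨k, rfl⟩ := Nat.exists_eq_succ_of_ne_zero hn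
  have h : stirlingSeq (k + 1) ≤ stirlingSeq 1 := stirlingSeq'_antitone (Nat.zero_le k)
  rw [stirlingSeq_one, stirlingSeq, div_le_iff₀ (by positivity)] at h
  calc _ ≤ _ := h
    _ = _ := by rw [sqrt_mul' _ (Nat.cast_nonneg _)]; field_simp

lemma factorial_two_mul_le (n : ℕ) :
    ((2 * n)! : ℝ) ≤ √2 * 4 ^ n * (n / exp 1) ^ n * n ! := by
  rcases Nat.eq_zero_or_pos n with rfl | hn
  · simp
  have h : stirlingSeq (2 * n) ≤ stirlingSeq n := by
    obtain ⟨k, rfl⟩ := Nat.exists_eq_succ_of_ne_zero hn.ne'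
    exact stirlingSeq'_antitone (show k ≤ 2 * k + 1 by omega)
  have hpos : (0 : ℝ) < √(2 * n) * (n / exp 1) ^ n := by positivity
  rw [stirlingSeq, stirlingSeq, div_le_div_iff₀ (by positivity) hpos] at h
  have hsplit : √(2 * ((2 * n : ℕ) : ℝ)) * ((2 * n : ℕ) / exp 1) ^ (2 * n)
      = √2 * 4 ^ n * (n / exp 1) ^ n * (√(2 * n) * (n / exp 1) ^ n) := by
    push_cast
    rw [sqrt_mul' _ (by positivity), mul_div_assoc, mul_pow, pow_mul (2 : ℝ), two_mul n, pow_add]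
    ring
  rw [hsplit, ← mul_assoc] at h
  exact le_of_mul_le_mul_right (by linarith) hpos

lemma four_pow_mul_factorial_le (n : ℕ) :
    4 ^ n * (n / exp 1) ^ n * n ! ≤ ((2 * n)! : ℝ) := by
  rcases Nat.eq_zero_or_pos n with rfl | hn
  · simp
  calc 4 ^ n * (n / exp 1) ^ n * n !
      ≤ 4 ^ n * (n / exp 1) ^ n * (exp 1 * √n * (n / exp 1) ^ n) := by
        gcongr; exact factorial_le_exp_one_mul_sqrt hn.ne'
    _ ≤ 4 ^ n * (n / exp 1) ^ n * (2 * √π * √n * (n / exp 1) ^ n) := by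
        gcongr; exact exp_one_le_two_mul_sqrt_pi
    _ = √(2 * π * (2 * n : ℕ)) * ((2 * n : ℕ) / exp 1) ^ (2 * n) := by
        push_cast
        rw [show 2 * π * (2 * n) = 2 ^ 2 * π * n by ring, sqrt_mul' _ (Nat.cast_nonneg _),
          sqrt_mul (by positivity), sqrt_sq (by norm_num), mul_div_assoc, mul_pow,
          pow_mul (2 : ℝ), two_mul n, pow_add]
        ring
    _ ≤ _ := le_factorial_stirling _

end Stirling

lemma Nat.apply_le_apply_of_le_succ_of_succ_le {α : Type*} [Preorder α] {f : ℕ → α} {m : ℕ}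
    (hup : ∀ n < m, f n ≤ f (n + 1)) (hdown : ∀ n ≥ m, f (n + 1) ≤ f n) (c : ℕ) : f c ≤ f m := by
  rcases le_total c m with hcm | hmc
  · have hmono : Monotone fun n ↦ f (min n m) := monotone_nat_of_le_succ fun n ↦ by
      rcases lt_or_ge n m with hn | hn
      · simpa [min_eq_left hn.le, min_eq_left (Nat.succ_le_of_lt hn)] using hup n hn
      · simp [min_eq_right hn, min_eq_right (hn.trans n.le_succ)]
    simpa [min_eq_left hcm] using hmono hcm
  · exact antitoneOn_nat_Ici_of_succ_le hdown Set.self_mem_Ici hmc hmc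

lemma factorial_add_div_two_pow_mul_factorial_le (c m : ℕ) :
    ((c + m)! : ℝ) / (2 ^ c * c !) ≤ (2 * m)! / (2 ^ m * m !) := by
  set g : ℕ → ℝ := fun k ↦ (k + m)! / (2 ^ k * k !)
  have hstep (k : ℕ) : g (k + 1) = g k * ((k + m + 1) / (2 * (k + 1))) := by
    simp only [g, show k + 1 + m = k + m + 1 by ring, Nat.factorial_succ, pow_succ]
    push_cast
    field_simp
  have hg := Nat.apply_le_apply_of_le_succ_of_succ_le (f := g) (m := m)
    (fun k hk ↦ by
      rw [hstep]
      refine le_mul_of_one_le_right (by positivity) ?_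
      rw [one_le_div (by positivity)]
      have : (k : ℝ) + 1 ≤ m := by exact_mod_cast hk
      linarith)
    (fun k hk ↦ by
      rw [hstep]
      refine mul_le_of_le_one_right (by positivity) ?_
      rw [div_le_one (by positivity)]
      have : (m : ℝ) ≤ k := by exact_mod_cast hk
      linarith) c
  simpa [g, two_mul] using hg

lemma factorial_add_le (c m : ℕ) :
    ((c + m)! : ℝ) ≤ √2 * 2 ^ (c + m) * (m / exp 1) ^ m * c ! := by
  have h := (factorial_add_div_two_pow_mul_factorial_le c m).trans
    (div_le_div_of_nonneg_right (Stirling.factorial_two_mul_le m) (by positivity))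
  rw [div_le_div_iff₀ (by positivity) (by positivity)] at h
  refine le_of_mul_le_mul_right (a := 2 ^ m * (m ! : ℝ)) ?_ (by positivity)
  calc _ ≤ _ := h
    _ = _ := by rw [show (4 : ℝ) ^ m = 2 ^ m * 2 ^ m by rw [← mul_pow]; norm_num]; ring

lemma div_pow_le_exp_div {a : ℝ} (ha : 0 < a) {m : ℕ} (hm : (m : ℝ) ≤ a + 1) :
    ((m : ℝ) / a) ^ m ≤ exp (m / a) := by
  have hexp : (m : ℝ) * (m / a - 1) ≤ m / a :=
    calc (m : ℝ) * (m / a - 1) = m / a * (m - a) := by field_simp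
      _ ≤ m / a * 1 := by gcongr; linarith
      _ = m / a := mul_one _
  calc ((m : ℝ) / a) ^ m ≤ exp (m / a - 1) ^ m := by
        gcongr
        linarith [add_one_le_exp ((m : ℝ) / a - 1)]
    _ = exp (m * (m / a - 1)) := (exp_nat_mul _ _).symm
    _ ≤ exp (m / a) := exp_le_exp.mpr hexp

lemma prod_factorial_add_le {ι : Type*} [Fintype ι] (c μ : ι → ℕ) {a : ℝ} (ha : 0 < a)
    (hμ : ∀ i, (μ i : ℝ) ≤ a + 1) :
    ∏ i, ((c i + μ i)! : ℝ) ≤ √2 ^ Fintype.card ι * 2 ^ (∑ i, (c i + μ i)) *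
      (a / exp 1) ^ (∑ i, μ i) * exp ((∑ i, μ i : ℕ) / a) * ∏ i, ((c i)! : ℝ) := by
  have hfac (i : ι) : ((c i + μ i)! : ℝ)
      ≤ √2 * 2 ^ (c i + μ i) * (a / exp 1) ^ μ i * exp (μ i / a) * (c i)! := by
    calc _ ≤ √2 * 2 ^ (c i + μ i) * (μ i / exp 1) ^ μ i * (c i)! := factorial_add_le _ _
      _ = √2 * 2 ^ (c i + μ i) * (a / exp 1) ^ μ i * (μ i / a) ^ μ i * (c i)! := by
        rw [mul_assoc _ ((a / _) ^ _), ← mul_pow, div_mul_div_comm, mul_comm a,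
          mul_div_mul_right _ _ ha.ne']
      _ ≤ _ := by gcongr; exact div_pow_le_exp_div ha (hμ i)
  calc _ ≤ ∏ i, (√2 * 2 ^ (c i + μ i) * (a / exp 1) ^ μ i * exp (μ i / a) * (c i)!) :=
        prod_le_prod (fun _ _ ↦ by positivity) fun i _ ↦ hfac i
    _ = _ := by
      simp only [prod_mul_distrib, prod_const, prod_pow_eq_pow_sum, ← exp_sum, ← sum_div,
        card_univ]
      push_cast
      rfl

lemma le_sum_div_card_add_one {ι : Type*} [Fintype ι] {f : ι → ℕ} (h : ∀ i j, f i ≤ f j + 1)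
    (i : ι) : (f i : ℝ) ≤ (∑ j, f j : ℕ) / Fintype.card ι + 1 := by
  have hcard : (0 : ℝ) < Fintype.card ι := by exact_mod_cast Fintype.card_pos_iff.mpr ⟨i⟩
  have hsum : Fintype.card ι * f i ≤ ∑ j, f j + Fintype.card ι :=
    calc Fintype.card ι * f i = ∑ _j, f i := by simp
      _ ≤ ∑ j, (f j + 1) := sum_le_sum fun j _ ↦ h i j
      _ = ∑ j, f j + Fintype.card ι := by simp [sum_add_distrib]
  rw [div_add_one hcard.ne', le_div_iff₀ hcard, mul_comm]
  exact_mod_cast hsum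

/-- Let `d ≥ 1` and `t ≥ 0` be integers, and let `μ, c : {1,…,d} → ℕ`
with `∑ μᵢ = ∑ cᵢ = 2t` and `|μᵢ − μⱼ| ≤ 1` for all `i, j`. Then
`(2t)! · d^(2t) · ∏ (cᵢ + μᵢ)! ≤ (2e)^d · (4t)! · ∏ cᵢ!`; equivalently, for multinomial
counts, `Pr(C^(2t) = c) ≤ (2e)^d · Pr(C^(4t) = c + μ)`. -/
theorem multinomial_density_comparison (d t : ℕ) (hd : 1 ≤ d)
    (μ c : Fin d → ℕ)
    (hμsum : ∑ i, μ i = 2 * t) (hcsum : ∑ i, c i = 2 * t)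
    (hbal : ∀ i j, μ i ≤ μ j + 1) :
    ((2 * t).factorial : ℝ) * (d : ℝ) ^ (2 * t) * ∏ i, ((c i + μ i).factorial : ℝ)
      ≤ (2 * Real.exp 1) ^ d * ((4 * t).factorial : ℝ) * ∏ i, ((c i).factorial : ℝ) := by
  rcases Nat.eq_zero_or_pos t with rfl | ht
  · have hc : ∀ i, c i = 0 := by simpa using hcsum
    have hμ : ∀ i, μ i = 0 := by simpa using hμsum
    simpa [hc, hμ] using one_le_pow₀ (by linarith [add_one_le_exp 1] : (1 : ℝ) ≤ 2 * exp 1)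
  have hd' : (0 : ℝ) < d := by exact_mod_cast hd
  set a : ℝ := (∑ i, μ i : ℕ) / d with ha_def
  have hda : d * a = (2 * t : ℕ) := by rw [ha_def, hμsum, mul_div_cancel₀ _ hd'.ne']
  have ha : 0 < a := by rw [ha_def, hμsum]; positivity
  have hprod := prod_factorial_add_le c μ ha fun i ↦ by
    simpa only [Fintype.card_fin] using le_sum_div_card_add_one hbal i
  rw [sum_add_distrib, hcsum, hμsum, Fintype.card_fin, ← hda, mul_div_cancel_right₀ _ ha.ne',
    ← exp_one_pow] at hprod
  calc _ ≤ ((2 * t)! : ℝ) * d ^ (2 * t) * (√2 ^ d * 2 ^ (2 * t + 2 * t) * (a / exp 1) ^ (2 * t)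
        * exp 1 ^ d * ∏ i, ((c i)! : ℝ)) := by gcongr
    _ = (√2 * exp 1) ^ d * (4 ^ (2 * t) * ((2 * t : ℕ) / exp 1) ^ (2 * t) * (2 * t)!)
        * ∏ i, ((c i)! : ℝ) := by
      rw [← hda, mul_div_assoc, mul_pow _ (a / _), pow_add, ← mul_pow, mul_pow (√2)]
      norm_num; ring
    _ ≤ (√2 * exp 1) ^ d * (4 * t)! * ∏ i, ((c i)! : ℝ) := by
      gcongr
      exact (Stirling.four_pow_mul_factorial_le _).trans_eq (by rw [← mul_assoc]; norm_num)
    _ ≤ _ := by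
      gcongr
      rw [sqrt_le_left (by norm_num)]; norm_num
end

section
/- Let Γ be an abelian group (written additively), let d be a positive even integer, let s : {1, …, d} → Γ, and let σ be a fixed-point-free involution of {1, …, d} with s(σ(i)) = −s(i) for all i. Then for every t ∈ ℕ there exists μ : {1, …, d} → ℕ such that Σ_{i=1}^d μ_i = 2t, Σ_{i=1}^d μ_i · s(i) = 0 in Γ, and |μ_i − μ_j| ≤ 1 for all i, j. -/
/-!
Since `σ` pairs off the indices, `d = 2m`; write `t = m q + k` with `k < m`, so that
`2t = d q + 2k`. Take `μ = q` everywhere, plus `1` on a `σ`-stable set `S` of `2k` indices, built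
from `k` pairs `{i, σ i}`. Then `μ` is balanced, and `∑ μᵢ • s(i) = q • ∑ᵢ s(i) + ∑_{i ∈ S} s(i)`
vanishes because over any `σ`-stable set the terms `s(i)` and `s(σ i) = -s(i)` cancel in pairs.
-/

open Finset

namespace Equiv.Perm

theorem sum_eq_zero_of_stable {α Γ : Type*} [AddCommGroup Γ] {σ : Perm α}
    (hσ : Function.Involutive σ) (hfree : ∀ a, σ a ≠ a) {s : α → Γ}
    (hneg : ∀ a, s (σ a) = -s a) {S : Finset α} (hS : ∀ a ∈ S, σ a ∈ S) : ∑ a ∈ S, s a = 0 :=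
  sum_involution (fun a _ ↦ σ a) (fun a _ ↦ by rw [hneg, add_neg_cancel])
    (fun a _ _ ↦ hfree a) hS (fun a _ ↦ hσ a)

variable {α : Type*} [Fintype α] [DecidableEq α] {σ : Perm α}

theorem even_card_of_involutive (hσ : Function.Involutive σ) (hfree : ∀ a, σ a ≠ a) :
    Even (Fintype.card α) := by
  have hsq : σ ^ 2 ^ 1 = 1 := by
    ext a
    simp [sq, hσ a]
  have hsupport : σ.supportᶜ = ∅ := by
    ext a
    simp [hfree a]
  have := card_compl_support_modEq (p := 2) hsq
  rw [hsupport, card_empty] at this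
  exact Nat.even_iff.mpr this.symm

theorem exists_stable_finset_card_eq_two_mul (hσ : Function.Involutive σ)
    (hfree : ∀ a, σ a ≠ a) {k : ℕ} (hk : 2 * k ≤ Fintype.card α) :
    ∃ S : Finset α, (∀ a ∈ S, σ a ∈ S) ∧ #S = 2 * k := by
  induction k with
  | zero => exact ⟨∅, by simp, rfl⟩
  | succ k ih =>
    obtain ⟨S, hS, hcard⟩ := ih (by omega)
    obtain ⟨a, -, haS⟩ := exists_mem_notMem_of_card_lt_card (s := S) (t := univ)
      (by rw [card_univ]; omega)
    have hσaS : σ a ∉ S := fun h ↦ haS (hσ a ▸ hS _ h)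
    refine ⟨insert a (insert (σ a) S), ?_, ?_⟩
    · simp only [mem_insert]
      rintro b (rfl | rfl | hb)
      · exact Or.inr (Or.inl rfl)
      · exact Or.inl (hσ a)
      · exact Or.inr (Or.inr (hS b hb))
    · rw [card_insert_of_notMem (by simp [haS, (hfree a).symm]), card_insert_of_notMem hσaS,
        hcard]
      ring

end Equiv.Perm

theorem exists_balanced_returning_count_general {Γ : Type*} [AddCommGroup Γ]
    (d : ℕ) (hd : 0 < d)
    (s : Fin d → Γ) (σ : Equiv.Perm (Fin d))
    (hinv : ∀ i, σ (σ i) = i) (hfree : ∀ i, σ i ≠ i)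
    (hneg : ∀ i, s (σ i) = -s i) (t : ℕ) :
    ∃ μ : Fin d → ℕ,
      (∑ i, μ i = 2 * t) ∧ (∑ i, μ i • s i = 0) ∧ (∀ i j, μ i ≤ μ j + 1) := by
  obtain ⟨m, hm⟩ := Fintype.card_fin d ▸ Equiv.Perm.even_card_of_involutive hinv hfree
  have hdiv := Nat.div_add_mod t m
  have hmod : t % m < m := Nat.mod_lt t (by omega)
  obtain ⟨S, hS, hcard⟩ :=
    Equiv.Perm.exists_stable_finset_card_eq_two_mul hinv hfree (k := t % m)
      (by rw [Fintype.card_fin]; omega)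
  refine ⟨fun i ↦ t / m + if i ∈ S then 1 else 0, ?_, ?_,
    fun i j ↦ by dsimp only; split_ifs <;> omega⟩
  · rw [sum_add_distrib, sum_boole, sum_const, card_univ, Fintype.card_fin, smul_eq_mul,
      filter_mem_eq_inter, univ_inter, hcard, hm, Nat.cast_id]
    linarith
  · simp only [add_smul, sum_add_distrib, ← smul_sum, ite_smul, one_smul, zero_smul,
      sum_ite_mem, univ_inter]
    rw [Equiv.Perm.sum_eq_zero_of_stable hinv hfree hneg (fun i _ ↦ mem_univ (σ i)),
      Equiv.Perm.sum_eq_zero_of_stable hinv hfree hneg hS, smul_zero, add_zero]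

/-- Let `Γ` be an abelian group, `d` a positive even integer,
`s : {1,…,d} → Γ`, and `σ` a fixed-point-free involution of `{1,…,d}` with
`s(σ(i)) = −s(i)`. Then for every `t ∈ ℕ` there is a balanced `μ : {1,…,d} → ℕ`
with `∑ μᵢ = 2t`, `∑ μᵢ·s(i) = 0`, and `|μᵢ − μⱼ| ≤ 1` for all `i, j`. -/
theorem exists_balanced_returning_count {Γ : Type*} [AddCommGroup Γ]
    (d : ℕ) (hd : 0 < d) (hdeven : Even d)
    (s : Fin d → Γ) (σ : Equiv.Perm (Fin d))
    (hinv : ∀ i, σ (σ i) = i) (hfree : ∀ i, σ i ≠ i)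
    (hneg : ∀ i, s (σ i) = -s i) (t : ℕ) :
    ∃ μ : Fin d → ℕ,
      (∑ i, μ i = 2 * t) ∧ (∑ i, μ i • s i = 0) ∧ (∀ i j, μ i ≤ μ j + 1) :=
  exists_balanced_returning_count_general d hd s σ hinv hfree hneg t
end

section
/- Let G = Cay(Γ, S) be an Abelian Cayley graph with |Γ| = n and |S| = d, with normalized adjacency matrix A. For every nonempty Q ⊆ Γ and every integer t ≥ 0, the conductance of Q in the 2t-th power graph satisfies φ_{G^{2t}}(Q) = (1_Q^T (I − A^{2t}) 1_Q)/|Q| ≤ 2·√(t·d)·φ_G(Q). -/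
/-!
Expanding `A ^ m` over walks with `m` independent uniform steps from `S`, the quadratic form
`1_Qᵀ (I - A ^ m) 1_Q` is the mean over walks of `escape Q w = #{x ∈ Q | x + w ∉ Q}`, `w` being
the endpoint. This count is subadditive and even in `w`, and since `Γ` is abelian, `w` only
depends on how often each generator is used. Pairing `g` with `-g` bounds it by
`∑ |#g - #(-g)| * escape Q g`, plus parity terms for the involutions `g = -g`. Now `#g - #(-g)`
is a sum of `m` independent centred steps of variance `2 mult(g) / d`, so by Cauchy–Schwarz its
mean absolute value is at most `mult(g) √(2m / d)`. Summing over `g` gives `√(2m / d) |∂Q|`,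
which for `m = 2t` is `2 √(t d) φ(Q) |Q|`.
-/

open Matrix

/-- `|∂Q|`: number of boundary edges of `Q` in `Cay(Γ, S)`, counted with multiplicity. -/
def cutEdges {Γ : Type*} [AddCommGroup Γ] [Fintype Γ] [DecidableEq Γ]
    (S : Multiset Γ) (Q : Finset Γ) : ℕ :=
  ∑ x ∈ Q, Multiset.card (S.filter (fun s => x + s ∉ Q))

/-- Conductance `φ_G(Q) = |∂Q| / (d·|Q|)` of a set `Q` in `Cay(Γ, S)`. -/
noncomputable def condSet {Γ : Type*} [AddCommGroup Γ] [Fintype Γ] [DecidableEq Γ]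
    (S : Multiset Γ) (Q : Finset Γ) : ℝ :=
  (cutEdges S Q : ℝ) / ((Multiset.card S : ℝ) * (Q.card : ℝ))

/-- 0/1 indicator vector of `Q`. -/
def indVec {Γ : Type*} [DecidableEq Γ] (Q : Finset Γ) : Γ → ℝ :=
  fun x => if x ∈ Q then 1 else 0

open Finset

def escape {Γ : Type*} [Add Γ] [DecidableEq Γ] (Q : Finset Γ) (g : Γ) : ℕ :=
  #{x ∈ Q | x + g ∉ Q}

section escape

variable {Γ : Type*} [AddCommGroup Γ] [DecidableEq Γ] (Q : Finset Γ)

@[simp]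
lemma escape_zero : escape Q 0 = 0 := by
  simp [escape]

lemma escape_add_le (g h : Γ) : escape Q (g + h) ≤ escape Q g + escape Q h := by
  calc escape Q (g + h)
      ≤ #({x ∈ Q | x + g ∉ Q} ∪ {x ∈ Q | x + g ∈ Q ∧ x + g + h ∉ Q}) := by
        refine card_le_card fun x hx => ?_
        simp only [mem_filter, mem_union, ← add_assoc] at hx ⊢
        tauto
    _ ≤ escape Q g + #{x ∈ Q | x + g ∈ Q ∧ x + g + h ∉ Q} := card_union_le _ _
    _ ≤ escape Q g + escape Q h := by
        refine Nat.add_le_add_left (card_le_card_of_injOn (· + g) (fun x hx => ?_)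
          (add_left_injective g).injOn) _
        simp only [coe_filter, Set.mem_ofPred_eq] at hx ⊢
        exact ⟨hx.2.1, hx.2.2⟩

/-- Translating by `g` is a bijection from `{x ∈ Q | x + g ∈ Q}` onto `{y ∈ Q | y - g ∈ Q}`. -/
lemma escape_neg (g : Γ) : escape Q (-g) = escape Q g := by
  have hstay : #{x ∈ Q | x + -g ∈ Q} = #{x ∈ Q | x + g ∈ Q} :=
    card_nbij' (· + -g) (· + g) (fun x hx => by simp_all) (fun x hx => by simp_all)
      (fun x _ => by simp) (fun x _ => by simp)
  have h₁ := card_filter_add_card_filter_not (s := Q) (fun x => x + -g ∈ Q)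
  have h₂ := card_filter_add_card_filter_not (s := Q) (fun x => x + g ∈ Q)
  simp only [escape]
  omega

lemma escape_nsmul_le (n : ℕ) (g : Γ) : escape Q (n • g) ≤ n * escape Q g := by
  induction n with
  | zero => simp
  | succ n ih =>
    rw [succ_nsmul, add_mul, one_mul]
    exact (escape_add_le Q _ _).trans (Nat.add_le_add_right ih _)

lemma escape_zsmul_le (z : ℤ) (g : Γ) : escape Q (z • g) ≤ z.natAbs * escape Q g := by
  obtain ⟨n, rfl | rfl⟩ := z.eq_nat_or_neg
  · simpa using escape_nsmul_le Q n g
  · simpa [escape_neg] using escape_nsmul_le Q n g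

lemma escape_sum_zsmul_le {ι : Type*} (s : Finset ι) (z : ι → ℤ) (g : ι → Γ) :
    escape Q (∑ i ∈ s, z i • g i) ≤ ∑ i ∈ s, (z i).natAbs * escape Q (g i) :=
  (le_sum_of_subadditive (escape Q) (escape_zero Q).le (escape_add_le Q) s _).trans
    (sum_le_sum fun i _ => escape_zsmul_le Q (z i) (g i))

end escape

section tuples

variable {V : Type*} [Fintype V]

lemma sum_fun_fin_succ {M : Type*} [AddCommMonoid M] (m : ℕ) (F : (Fin (m + 1) → V) → M) :
    ∑ f, F f = ∑ s, ∑ f : Fin m → V, F (Fin.cons s f) := by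
  rw [← (Fin.consEquiv fun _ => V).sum_comp, Fintype.sum_prod_type]
  rfl

lemma card_mul_sum_sum_apply (ε : V → ℝ) (m : ℕ) :
    Fintype.card V * ∑ f : Fin m → V, ∑ i, ε (f i) = m * Fintype.card V ^ m * ∑ s, ε s := by
  induction m with
  | zero => simp
  | succ m ih =>
    simp only [sum_fun_fin_succ, Fin.sum_univ_succ, Fin.cons_zero, Fin.cons_succ,
      sum_add_distrib, sum_const, card_univ, Fintype.card_fun, Fintype.card_fin, nsmul_eq_mul,
      ← mul_sum]
    push_cast
    linear_combination (Fintype.card V : ℝ) * ih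

lemma card_mul_sum_sq_sum_apply (ε : V → ℝ) (hε : ∑ s, ε s = 0) (m : ℕ) :
    Fintype.card V * ∑ f : Fin m → V, (∑ i, ε (f i)) ^ 2
      = m * Fintype.card V ^ m * ∑ s, ε s ^ 2 := by
  induction m with
  | zero => simp
  | succ m ih =>
    simp only [sum_fun_fin_succ, Fin.sum_univ_succ, Fin.cons_zero, Fin.cons_succ, add_sq,
      sum_add_distrib, mul_assoc, ← mul_sum, sum_const, card_univ, Fintype.card_fun,
      Fintype.card_fin, nsmul_eq_mul]
    simp only [← sum_mul, hε, zero_mul, mul_zero]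
    push_cast
    linear_combination (Fintype.card V : ℝ) * ih

lemma sq_sum_abs_sum_apply_le [Nonempty V] (ε : V → ℝ) (hε : ∑ s, ε s = 0) (m : ℕ) :
    (∑ f : Fin m → V, |∑ i, ε (f i)|) ^ 2
      ≤ (Fintype.card V ^ m) ^ 2 * (m * (∑ s, ε s ^ 2) / Fintype.card V) := by
  have hd : (0 : ℝ) < Fintype.card V := by exact_mod_cast Fintype.card_pos
  have hmoment := card_mul_sum_sq_sum_apply ε hε m
  calc (∑ f : Fin m → V, |∑ i, ε (f i)|) ^ 2
      ≤ #(univ : Finset (Fin m → V)) * ∑ f : Fin m → V, |∑ i, ε (f i)| ^ 2 :=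
        sq_sum_le_card_mul_sum_sq
    _ = Fintype.card V ^ m * ∑ f : Fin m → V, (∑ i, ε (f i)) ^ 2 := by
        simp [sq_abs]
    _ = (Fintype.card V ^ m) ^ 2 * (m * (∑ s, ε s ^ 2) / Fintype.card V) := by
        field_simp
        linear_combination hmoment

end tuples

lemma le_mul_sqrt_mul_natCast_of_sq_le {x a b : ℝ} {c : ℕ} (ha : 0 ≤ a) (hb : 0 ≤ b)
    (h : x ^ 2 ≤ a ^ 2 * b * c) : x ≤ a * √b * c := by
  have hc : (c : ℝ) ≤ (c : ℝ) ^ 2 := by exact_mod_cast Nat.le_self_pow two_ne_zero c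
  have hx : x ≤ √((a * c) ^ 2 * b) :=
    Real.le_sqrt_of_sq_le (h.trans (by nlinarith [mul_nonneg (sq_nonneg a) hb]))
  rwa [Real.sqrt_mul (sq_nonneg _), Real.sqrt_sq (by positivity), mul_right_comm] at hx

section stepCount

variable {Γ : Type*} [DecidableEq Γ] {V : Type*} (v : V → Γ) {m : ℕ}

def stepCount (f : Fin m → V) (g : Γ) : ℕ := #{i | v (f i) = g}

/-- The parity is at most `1` and at most the count, whose mean is `m * #{s | v s = g} / card V`;
so the square of its sum is at most the product of the two bounds. -/
lemma sum_stepCount_mod_two_le [Fintype V] [Nonempty V] (g : Γ) :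
    ∑ f : Fin m → V, ((stepCount v f g % 2 : ℕ) : ℝ)
      ≤ Fintype.card V ^ m * √(2 * m / Fintype.card V) * #{s | v s = g} := by
  set P := ∑ f : Fin m → V, ((stepCount v f g % 2 : ℕ) : ℝ)
  have hd : (0 : ℝ) < Fintype.card V := by exact_mod_cast Fintype.card_pos
  have hP_le_card : P ≤ Fintype.card V ^ m := by
    calc P ≤ ∑ _f : Fin m → V, (1 : ℝ) :=
          sum_le_sum fun f _ => by exact_mod_cast Nat.le_of_lt_succ (Nat.mod_lt _ two_pos)
      _ = Fintype.card V ^ m := by simp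
  have hP_le_mean : P ≤ m * Fintype.card V ^ m * #{s | v s = g} / Fintype.card V := by
    have hmean : (Fintype.card V : ℝ) * ∑ f : Fin m → V, (stepCount v f g : ℝ)
        = m * Fintype.card V ^ m * #{s | v s = g} := by
      simpa only [stepCount, natCast_card_filter]
        using card_mul_sum_sum_apply (fun s => if v s = g then (1 : ℝ) else 0) m
    calc P ≤ ∑ f : Fin m → V, (stepCount v f g : ℝ) :=
          sum_le_sum fun f _ => by exact_mod_cast Nat.mod_le _ _
      _ = m * Fintype.card V ^ m * #{s | v s = g} / Fintype.card V := by
          rw [eq_div_iff hd.ne', ← hmean, mul_comm]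
  refine le_mul_sqrt_mul_natCast_of_sq_le (by positivity) (by positivity) ?_
  calc P ^ 2 ≤ Fintype.card V ^ m * (m * Fintype.card V ^ m * #{s | v s = g} / Fintype.card V) := by
        rw [sq]; exact mul_le_mul hP_le_card hP_le_mean (by positivity) (by positivity)
    _ = (Fintype.card V ^ m) ^ 2 * (m / Fintype.card V) * #{s | v s = g} := by ring
    _ ≤ (Fintype.card V ^ m) ^ 2 * (2 * m / Fintype.card V) * #{s | v s = g} := by
        gcongr
        linarith

end stepCount

section negReps

variable (Γ : Type*) [Fintype Γ] [InvolutiveNeg Γ]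

/-- One representative of every orbit `{g, -g}` with `-g ≠ g`: the one coming first in an
arbitrary enumeration of `Γ`. -/
noncomputable def negReps : Finset Γ := {g | Fintype.equivFin Γ g < Fintype.equivFin Γ (-g)}

variable {Γ}

lemma neg_ne_self_of_mem_negReps {g : Γ} (hg : g ∈ negReps Γ) : -g ≠ g := by
  intro h
  simp [negReps, h] at hg

lemma neg_notMem_negReps {g : Γ} (hg : g ∈ negReps Γ) : -g ∉ negReps Γ := by
  simp only [negReps, mem_filter, mem_univ, true_and, neg_neg, not_lt] at hg ⊢
  exact hg.le

lemma sum_univ_eq_sum_negReps [DecidableEq Γ] {M : Type*} [AddCommMonoid M] (F : Γ → M) :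
    ∑ g, F g = ∑ g ∈ negReps Γ, (F g + F (-g)) + ∑ g with -g = g, F g := by
  set e := Fintype.equivFin Γ
  have hsplit : ∀ g, F g = (if e g < e (-g) then F g else 0) + (if e (-g) < e g then F g else 0)
      + (if -g = g then F g else 0) := by
    intro g
    rcases lt_trichotomy (e g) (e (-g)) with h | h | h
    · have hg : -g ≠ g := fun hg => h.ne (by rw [hg])
      simp [h, h.not_gt, hg]
    · simp [e.injective h.symm]
    · have hg : -g ≠ g := fun hg => h.ne' (by rw [hg])
      simp [h, h.not_gt, hg]
  have hneg : ∑ g, (if e (-g) < e g then F g else 0) = ∑ g, (if e g < e (-g) then F (-g) else 0) :=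
    Fintype.sum_equiv (Equiv.neg Γ) _ _ fun g => by simp
  rw [sum_congr rfl fun g _ => hsplit g, sum_add_distrib, sum_add_distrib, hneg,
    ← sum_filter, ← sum_filter, ← sum_filter, ← sum_add_distrib]
  rfl

end negReps

section walks

variable {Γ : Type*} [AddCommGroup Γ] [Fintype Γ] [DecidableEq Γ] {V : Type*} (v : V → Γ) {m : ℕ}

/-- Coefficients `a` with `∑ g, a g • g = ∑ i, v (f i)`, reduced so that each orbit `{g, -g}`
contributes once: net steps along a representative `g`, and the parity of the number of steps
along an involution. -/
noncomputable def netCoeff (f : Fin m → V) (g : Γ) : ℤ :=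
  if g ∈ negReps Γ then stepCount v f g - stepCount v f (-g)
  else if -g = g then (stepCount v f g % 2 : ℕ) else 0

lemma sum_stepCount_nsmul (f : Fin m → V) : ∑ g, stepCount v f g • g = ∑ i, v (f i) := by
  refine Eq.trans ?_ (sum_fiberwise' univ (fun i => v (f i)) id)
  simp only [id, sum_const, stepCount]

lemma sum_netCoeff_zsmul (f : Fin m → V) : ∑ g, netCoeff v f g • g = ∑ i, v (f i) := by
  rw [← sum_stepCount_nsmul, sum_univ_eq_sum_negReps, sum_univ_eq_sum_negReps]
  congr 1
  · refine sum_congr rfl fun g hg => ?_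
    simp [netCoeff, hg, neg_notMem_negReps hg, (neg_ne_self_of_mem_negReps hg).symm, sub_zsmul]
  · refine sum_congr rfl fun g hg => ?_
    have hg : -g = g := (mem_filter.mp hg).2
    have h2g : (2 : ℕ) • g = 0 := by rw [two_nsmul]; nth_rw 1 [← hg]; exact neg_add_cancel g
    have hrep : g ∉ negReps Γ := fun h => neg_ne_self_of_mem_negReps h hg
    conv_rhs => rw [← Nat.mod_add_div (stepCount v f g) 2, add_nsmul, mul_nsmul, h2g, nsmul_zero,
      add_zero]
    simp only [netCoeff, hrep, hg, if_false, if_true, natCast_zsmul]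

lemma escape_walk_le (Q : Finset Γ) (f : Fin m → V) :
    escape Q (∑ i, v (f i)) ≤ ∑ g, (netCoeff v f g).natAbs * escape Q g := by
  rw [← sum_netCoeff_zsmul]
  exact escape_sum_zsmul_le Q univ _ _

variable [Fintype V] [Nonempty V]

lemma sum_natAbs_netCoeff_le_of_mem_negReps (hsym : ∀ g, #{s | v s = -g} = #{s | v s = g})
    {g : Γ} (hg : g ∈ negReps Γ) :
    ∑ f : Fin m → V, ((netCoeff v f g).natAbs : ℝ)
      ≤ Fintype.card V ^ m * √(2 * m / Fintype.card V) * #{s | v s = g} := by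
  set ε : V → ℝ := fun s => (if v s = g then 1 else 0) - if v s = -g then 1 else 0
  have hne : g ≠ -g := (neg_ne_self_of_mem_negReps hg).symm
  have hnet : ∀ f : Fin m → V, ((netCoeff v f g).natAbs : ℝ) = |∑ i, ε (f i)| := by
    intro f
    simp only [netCoeff, hg, if_true, Nat.cast_natAbs, Int.cast_abs, Int.cast_sub,
      Int.cast_natCast, stepCount]
    rw [natCast_card_filter, natCast_card_filter, ← sum_sub_distrib]
  have hε : ∑ s, ε s = 0 := by
    simp [ε, sum_sub_distrib, hsym]
  have hε2 : ∑ s, ε s ^ 2 = 2 * #{s | v s = g} := by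
    have : ∀ s, ε s ^ 2 = (if v s = g then 1 else 0) + if v s = -g then 1 else 0 := by
      intro s
      by_cases h₁ : v s = g <;> by_cases h₂ : v s = -g <;> simp_all [ε]
    simp [this, sum_add_distrib, hsym, two_mul]
  refine le_mul_sqrt_mul_natCast_of_sq_le (by positivity) (by positivity) ?_
  simp only [hnet]
  calc (∑ f : Fin m → V, |∑ i, ε (f i)|) ^ 2
      ≤ (Fintype.card V ^ m) ^ 2 * (m * (∑ s, ε s ^ 2) / Fintype.card V) :=
        sq_sum_abs_sum_apply_le ε hε m
    _ = (Fintype.card V ^ m) ^ 2 * (2 * m / Fintype.card V) * #{s | v s = g} := by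
        rw [hε2]; ring

lemma sum_natAbs_netCoeff_le (hsym : ∀ g, #{s | v s = -g} = #{s | v s = g}) (g : Γ) :
    ∑ f : Fin m → V, ((netCoeff v f g).natAbs : ℝ)
      ≤ Fintype.card V ^ m * √(2 * m / Fintype.card V) * #{s | v s = g} := by
  by_cases hg : g ∈ negReps Γ
  · exact sum_natAbs_netCoeff_le_of_mem_negReps v hsym hg
  by_cases hinv : -g = g
  · simp only [netCoeff, hg, hinv, if_false, if_true, Int.natAbs_natCast]
    exact sum_stepCount_mod_two_le v g
  · simp only [netCoeff, hg, hinv, if_false, Int.natAbs_zero, Nat.cast_zero, sum_const_zero]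
    positivity

lemma sum_escape_walk_le (hsym : ∀ g, #{s | v s = -g} = #{s | v s = g}) (Q : Finset Γ) (m : ℕ) :
    ∑ f : Fin m → V, (escape Q (∑ i, v (f i)) : ℝ)
      ≤ Fintype.card V ^ m * √(2 * m / Fintype.card V) * ∑ s, escape Q (v s) := by
  calc ∑ f : Fin m → V, (escape Q (∑ i, v (f i)) : ℝ)
      ≤ ∑ f : Fin m → V, ∑ g, ((netCoeff v f g).natAbs : ℝ) * escape Q g :=
        sum_le_sum fun f _ => by exact_mod_cast escape_walk_le v Q f
    _ = ∑ g, (∑ f : Fin m → V, ((netCoeff v f g).natAbs : ℝ)) * escape Q g := by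
        rw [sum_comm]; simp only [sum_mul]
    _ ≤ ∑ g, Fintype.card V ^ m * √(2 * m / Fintype.card V) * #{s | v s = g} * escape Q g := by
        gcongr with g
        exact sum_natAbs_netCoeff_le v hsym g
    _ = Fintype.card V ^ m * √(2 * m / Fintype.card V) * ∑ s, escape Q (v s) := by
        push_cast
        rw [← sum_fiberwise' univ v (fun g => (escape Q g : ℝ))]
        simp only [sum_const, nsmul_eq_mul, mul_sum, mul_assoc]

end walks

section mapUniv

variable {α : Type*} {S : Multiset α} {V : Type*} [Fintype V] {v : V → α}

lemma count_eq_card_filter_of_map_univ [DecidableEq α] (hv : univ.val.map v = S) (a : α) :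
    S.count a = #{s | v s = a} := by
  simp_rw [← hv, Multiset.count_map, eq_comm]
  rfl

lemma card_eq_card_of_map_univ (hv : univ.val.map v = S) : Multiset.card S = Fintype.card V := by
  rw [← hv, Multiset.card_map]
  rfl

end mapUniv

section cayley

variable {Γ : Type*} [AddCommGroup Γ] [Fintype Γ] [DecidableEq Γ] {S : Multiset Γ}
  {V : Type*} [Fintype V] {v : V → Γ}

lemma cutEdges_eq_sum_escape (hv : univ.val.map v = S) (Q : Finset Γ) :
    cutEdges S Q = ∑ s, escape Q (v s) := by
  simp only [cutEdges, escape, ← hv, Multiset.filter_map, Multiset.card_map]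
  change ∑ x ∈ Q, #{s | x + v s ∉ Q} = _
  simp only [card_filter]
  exact sum_comm

lemma cayleyAdj_mulVec (hv : univ.val.map v = S) (u : Γ → ℝ) (x : Γ) :
    (cayleyAdj S *ᵥ u) x = (∑ s, u (x + v s)) / Fintype.card V := by
  calc (cayleyAdj S *ᵥ u) x = ∑ y, #{s | v s = y - x} * u y / Fintype.card V := by
        simp [mulVec, dotProduct, cayleyAdj, div_mul_eq_mul_div,
          count_eq_card_filter_of_map_univ hv, card_eq_card_of_map_univ hv]
    _ = ∑ g, #{s | v s = g} * u (x + g) / Fintype.card V := by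
        rw [← Equiv.sum_comp (Equiv.addLeft x)]
        simp
    _ = (∑ s, u (x + v s)) / Fintype.card V := by
        rw [← sum_div, ← sum_fiberwise' univ v (fun g => u (x + g))]
        simp

lemma cayleyAdj_pow_mulVec (hv : univ.val.map v = S) (u : Γ → ℝ) (m : ℕ) (x : Γ) :
    (cayleyAdj S ^ m *ᵥ u) x = (∑ f : Fin m → V, u (x + ∑ i, v (f i))) / Fintype.card V ^ m := by
  induction m generalizing x with
  | zero => simp
  | succ m ih =>
    rw [pow_succ', ← mulVec_mulVec, cayleyAdj_mulVec hv]
    simp only [ih, sum_fun_fin_succ, Fin.sum_univ_succ, Fin.cons_zero, Fin.cons_succ, add_assoc,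
      ← sum_div, div_div, pow_succ]

lemma indVec_dotProduct_one_sub_pow_mulVec [Nonempty V] (hv : univ.val.map v = S)
    (Q : Finset Γ) (m : ℕ) :
    indVec Q ⬝ᵥ ((1 - cayleyAdj S ^ m) *ᵥ indVec Q)
      = (∑ f : Fin m → V, (escape Q (∑ i, v (f i)) : ℝ)) / Fintype.card V ^ m := by
  have hd : (Fintype.card V : ℝ) ^ m ≠ 0 := by simp
  have hescape : ∀ g, (escape Q g : ℝ) = ∑ x ∈ Q, (1 - indVec Q (x + g)) := by
    intro g
    rw [escape, natCast_card_filter]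
    exact sum_congr rfl fun x _ => by by_cases h : x + g ∈ Q <;> simp [indVec, h]
  have hsum_one : ∑ _f : Fin m → V, (1 : ℝ) = Fintype.card V ^ m := by simp
  calc indVec Q ⬝ᵥ ((1 - cayleyAdj S ^ m) *ᵥ indVec Q)
      = ∑ x ∈ Q, (1 - (∑ f : Fin m → V, indVec Q (x + ∑ i, v (f i))) / Fintype.card V ^ m) := by
        simp [dotProduct, sub_mulVec, cayleyAdj_pow_mulVec hv, indVec, ite_mul]
    _ = ∑ x ∈ Q, (∑ f : Fin m → V, (1 - indVec Q (x + ∑ i, v (f i)))) / Fintype.card V ^ m := by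
        refine sum_congr rfl fun x _ => ?_
        rw [sum_sub_distrib, hsum_one, sub_div, div_self hd]
    _ = (∑ f : Fin m → V, (escape Q (∑ i, v (f i)) : ℝ)) / Fintype.card V ^ m := by
        simp only [hescape]
        rw [← sum_div, sum_comm]

end cayley

theorem power_graph_conductance_buser_general
    {Γ : Type*} [AddCommGroup Γ] [Fintype Γ] [DecidableEq Γ]
    (S : Multiset Γ) (hS : S ≠ 0) (hsym : ∀ x : Γ, S.count (-x) = S.count x)
    (Q : Finset Γ) (t : ℕ) :
    dotProduct (indVec Q)
        (((1 : Matrix Γ Γ ℝ) - cayleyAdj S ^ (2 * t)).mulVec (indVec Q)) / (Q.card : ℝ)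
      ≤ 2 * Real.sqrt ((t : ℝ) * (Multiset.card S : ℝ)) * condSet S Q := by
  have hv := Multiset.map_univ_coe S
  have hd := card_eq_card_of_map_univ hv
  have : Nonempty S := Fintype.card_pos_iff.mp (hd ▸ Multiset.card_pos.mpr hS)
  have hsym' : ∀ g, #{s : S | (s : Γ) = -g} = #{s : S | (s : Γ) = g} := fun g => by
    rw [← count_eq_card_filter_of_map_univ hv, ← count_eq_card_filter_of_map_univ hv, hsym]
  have hsqrt :
      √(2 * (2 * t : ℕ) / Fintype.card S) = 2 * √(t * Fintype.card S) / Fintype.card S := by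
    rw [← Real.sqrt_sq (by positivity : 0 ≤ 2 * √(t * Fintype.card S) / Fintype.card S), div_pow,
      mul_pow, Real.sq_sqrt (by positivity)]
    congr 1
    field_simp
    push_cast
    ring
  have hwalk := sum_escape_walk_le (fun s : S => (s : Γ)) hsym' Q (2 * t)
  rw [indVec_dotProduct_one_sub_pow_mulVec hv, condSet, cutEdges_eq_sum_escape hv, hd]
  calc _ ≤ √(2 * (2 * t : ℕ) / Fintype.card S) * (∑ s : S, escape Q s : ℕ) / #Q := by
        gcongr
        rw [div_le_iff₀ (by positivity)]
        linarith
    _ = _ := by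
        rw [hsqrt]
        field_simp

/-- **combinatorial Buser inequality.** Let `G = Cay(Γ, S)` be an Abelian
Cayley graph of degree `d = |S|` with normalized adjacency matrix `A`. For every nonempty
`Q ⊆ Γ` and `t ≥ 0`, the conductance of `Q` in the power graph `G^(2t)`, i.e. the Rayleigh
quotient `(1_Q^T (I − A^(2t)) 1_Q)/|Q|`, is at most `2·√(t·d)·φ_G(Q)`. -/
theorem power_graph_conductance_buser
    {Γ : Type*} [AddCommGroup Γ] [Fintype Γ] [DecidableEq Γ]
    (S : Multiset Γ) (hS : S ≠ 0) (hsym : ∀ x : Γ, S.count (-x) = S.count x)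
    (Q : Finset Γ) (hQ : Q.Nonempty) (t : ℕ) :
    dotProduct (indVec Q)
        (((1 : Matrix Γ Γ ℝ) - cayleyAdj S ^ (2 * t)).mulVec (indVec Q)) / (Q.card : ℝ)
      ≤ 2 * Real.sqrt ((t : ℝ) * (Multiset.card S : ℝ)) * condSet S Q :=
  power_graph_conductance_buser_general S hS hsym Q t
end

section
/- Let p be an odd prime, m ≥ 1, and let S be a nonempty finite symmetric multiset of elements of (ℤ/pℤ)^m. Let G = Cay((ℤ/pℤ)^m, S) and let G' = Cay((ℤ/pℤ)^m, S'), where S' is the multiset union of kS = {k·s : s ∈ S} over k = 1, 2, …, (p−1)/2, so |S'| = ((p−1)/2)·|S|. Then φ(G) ≤ φ(G') ≤ ((p+1)/4)·φ(G). -/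
open Matrix

/-- Conductance `φ` of `Cay(Γ, S)`: minimum of `φ(Q)` over nonempty `Q` with `|Q| ≤ |Γ|/2`. -/
noncomputable def condGraph {Γ : Type*} [AddCommGroup Γ] [Fintype Γ] [DecidableEq Γ]
    (S : Multiset Γ) : ℝ :=
  sInf {r : ℝ | ∃ Q : Finset Γ, Q.Nonempty ∧ 2 * Q.card ≤ Fintype.card Γ ∧ r = condSet S Q}

/-- The multiset `S' = ⋃_{k=1}^{(p−1)/2} kS`, the union of the dilates `kS = {k·s : s ∈ S}`
for `k = 1, …, (p−1)/2`, with multiplicities inherited from `S`. -/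
def expandGens {Γ : Type*} [AddCommGroup Γ] (p : ℕ) (S : Multiset Γ) : Multiset Γ :=
  (Finset.Icc 1 ((p - 1) / 2)).val.bind fun k => S.map fun s => k • s

/-!
Dilation by `k` prime to `|Γ|` is an automorphism of `Γ`, so every set has the same conductance
for the dilate `kS` as its preimage has for `S`; the cut of a set for `S' = ⋃ₖ kS` is the sum of
its cuts for the `kS`, so its conductance for `S'` is the mean of those and `φ(G) ≤ φ(G')`.
Conversely an edge `x → x + k • s` leaving `Q` leaves it along one of the `k` edges
`x + i • s → x + (i + 1) • s`, so the cut for `kS` is at most `k` times the cut for `S`, and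
averaging `k` over `1, …, t` with `t = (p - 1) / 2` gives `φ(G') ≤ (t + 1) / 2 · φ(G)`.
-/

open Finset

section CutEdges

variable {Γ : Type*} [AddCommGroup Γ] [DecidableEq Γ]

def crossingCount (Q : Finset Γ) (s : Γ) : ℕ := #{x ∈ Q | x + s ∉ Q}

theorem crossingCount_add_le (Q : Finset Γ) (s t : Γ) :
    crossingCount Q (s + t) ≤ crossingCount Q s + crossingCount Q t := by
  have hsub : {x ∈ Q | x + (s + t) ∉ Q} ⊆
      {x ∈ Q | x + s ∉ Q} ∪ {y ∈ Q | y + t ∉ Q}.image (· - s) := by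
    intro x hx
    simp only [mem_filter, mem_union, mem_image] at hx ⊢
    by_cases hxs : x + s ∈ Q
    · exact Or.inr ⟨x + s, ⟨hxs, by rw [add_assoc]; exact hx.2⟩, add_sub_cancel_right x s⟩
    · exact Or.inl ⟨hx.1, hxs⟩
  calc crossingCount Q (s + t)
        ≤ #({x ∈ Q | x + s ∉ Q} ∪ {y ∈ Q | y + t ∉ Q}.image (· - s)) :=
        card_le_card hsub
    _ ≤ crossingCount Q s + crossingCount Q t :=
        (card_union_le _ _).trans (Nat.add_le_add_left card_image_le _)

theorem crossingCount_nsmul_le (Q : Finset Γ) (s : Γ) (k : ℕ) :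
    crossingCount Q (k • s) ≤ k * crossingCount Q s := by
  induction k with
  | zero => simp [crossingCount]
  | succ k ih =>
    rw [succ_nsmul, Nat.succ_mul]
    exact (crossingCount_add_le Q _ s).trans (Nat.add_le_add_right ih _)

theorem crossingCount_image_addEquiv (e : Γ ≃+ Γ) (Q : Finset Γ) (s : Γ) :
    crossingCount (Q.image e) (e s) = crossingCount Q s := by
  unfold crossingCount
  rw [filter_image, card_image_of_injective _ e.injective]
  simp only [← map_add, e.injective.mem_finset_image]

variable [Fintype Γ]

theorem cutEdges_eq_sum_crossingCount (S : Multiset Γ) (Q : Finset Γ) :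
    cutEdges S Q = (S.map (crossingCount Q)).sum := by
  induction S using Multiset.induction with
  | empty => simp [cutEdges]
  | cons s S ih =>
    rw [Multiset.map_cons, Multiset.sum_cons, ← ih, crossingCount, card_filter, cutEdges,
      cutEdges, ← sum_add_distrib]
    refine sum_congr rfl fun x _ => ?_
    rw [Multiset.filter_cons, Multiset.card_add]
    split_ifs <;> simp

theorem cutEdges_map_nsmul_le (k : ℕ) (S : Multiset Γ) (Q : Finset Γ) :
    cutEdges (S.map (k • ·)) Q ≤ k * cutEdges S Q := by
  rw [cutEdges_eq_sum_crossingCount, cutEdges_eq_sum_crossingCount, Multiset.map_map,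
    ← Multiset.sum_map_mul_left]
  exact Multiset.sum_map_le_sum_map _ _ fun s _ => crossingCount_nsmul_le Q s k

theorem cutEdges_map_addEquiv (e : Γ ≃+ Γ) (S : Multiset Γ) (Q : Finset Γ) :
    cutEdges (S.map e) Q = cutEdges S (Q.image e.symm) := by
  rw [cutEdges_eq_sum_crossingCount, cutEdges_eq_sum_crossingCount, Multiset.map_map]
  refine congrArg _ (Multiset.map_congr rfl fun s _ => ?_)
  rw [Function.comp_apply, ← crossingCount_image_addEquiv e.symm, e.symm_apply_apply]

theorem cutEdges_bind {ι : Type*} (I : Multiset ι) (f : ι → Multiset Γ) (Q : Finset Γ) :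
    cutEdges (I.bind f) Q = (I.map fun i => cutEdges (f i) Q).sum := by
  simp only [cutEdges_eq_sum_crossingCount, Multiset.map_bind, Multiset.sum_bind]

end CutEdges

theorem exists_nonempty_two_mul_card_le {Γ : Type*} [Zero Γ] [Fintype Γ]
    (hΓ : 2 ≤ Fintype.card Γ) :
    ∃ Q : Finset Γ, Q.Nonempty ∧ 2 * #Q ≤ Fintype.card Γ :=
  ⟨{0}, singleton_nonempty 0, by simpa using hΓ⟩

section Conductance

variable {Γ : Type*} [AddCommGroup Γ] [Fintype Γ] [DecidableEq Γ]

theorem condSet_nonneg (S : Multiset Γ) (Q : Finset Γ) : 0 ≤ condSet S Q := by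
  unfold condSet
  positivity

theorem condSet_map_addEquiv (e : Γ ≃+ Γ) (S : Multiset Γ) (Q : Finset Γ) :
    condSet (S.map e) Q = condSet S (Q.image e.symm) := by
  rw [condSet, condSet, cutEdges_map_addEquiv, Multiset.card_map,
    card_image_of_injective _ e.symm.injective]

theorem condSet_map_nsmul_le (k : ℕ) (S : Multiset Γ) (Q : Finset Γ) :
    condSet (S.map (k • ·)) Q ≤ k * condSet S Q := by
  rw [condSet, condSet, Multiset.card_map, ← mul_div_assoc]
  gcongr
  exact_mod_cast cutEdges_map_nsmul_le k S Q

theorem condSet_bind {ι : Type*} (I : Finset ι) (f : ι → Multiset Γ) {n : ℕ}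
    (hcard : ∀ i ∈ I, Multiset.card (f i) = n) (Q : Finset Γ) :
    condSet (I.val.bind f) Q = (∑ i ∈ I, condSet (f i) Q) / #I := by
  have hcard_bind : Multiset.card (I.val.bind f) = #I * n := by
    rw [Multiset.card_bind]
    exact Finset.sum_const_nat hcard
  rw [condSet, cutEdges_bind, hcard_bind, ← Finset.sum_eq_multiset_sum, Nat.cast_sum,
    Finset.sum_div, Finset.sum_div]
  refine sum_congr rfl fun i hi => ?_
  rw [condSet, hcard i hi]
  push_cast
  ring

theorem condGraph_le_condSet (S : Multiset Γ) {Q : Finset Γ} (hQ : Q.Nonempty)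
    (hQΓ : 2 * #Q ≤ Fintype.card Γ) : condGraph S ≤ condSet S Q :=
  csInf_le ⟨0, by rintro _ ⟨Q, -, -, rfl⟩; exact condSet_nonneg S Q⟩ ⟨Q, hQ, hQΓ, rfl⟩

theorem le_condGraph (S : Multiset Γ) (hΓ : 2 ≤ Fintype.card Γ) {r : ℝ}
    (h : ∀ Q : Finset Γ, Q.Nonempty → 2 * #Q ≤ Fintype.card Γ → r ≤ condSet S Q) :
    r ≤ condGraph S := by
  obtain ⟨Q₀, hQ₀, hQ₀Γ⟩ := exists_nonempty_two_mul_card_le hΓ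
  rw [condGraph]
  refine le_csInf ⟨_, Q₀, hQ₀, hQ₀Γ, rfl⟩ ?_
  rintro _ ⟨Q, hQ, hQΓ, rfl⟩
  exact h Q hQ hQΓ

theorem exists_condSet_eq_condGraph (S : Multiset Γ) (hΓ : 2 ≤ Fintype.card Γ) :
    ∃ Q : Finset Γ, Q.Nonempty ∧ 2 * #Q ≤ Fintype.card Γ ∧ condSet S Q = condGraph S := by
  obtain ⟨Q₀, hQ₀, hQ₀Γ⟩ := exists_nonempty_two_mul_card_le hΓ
  let T : Set ℝ :=
    {r | ∃ Q : Finset Γ, Q.Nonempty ∧ 2 * #Q ≤ Fintype.card Γ ∧ r = condSet S Q}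
  have hfin : T.Finite :=
    (Set.finite_range (condSet S)).subset <| by rintro _ ⟨Q, -, -, rfl⟩; exact ⟨Q, rfl⟩
  obtain ⟨Q, hQ, hQΓ, hmin⟩ :=
    Set.Nonempty.csInf_mem (s := T) ⟨_, Q₀, hQ₀, hQ₀Γ, rfl⟩ hfin
  exact ⟨Q, hQ, hQΓ, hmin.symm⟩

end Conductance

theorem sum_Icc_one_natCast (t : ℕ) : ∑ k ∈ Icc 1 t, (k : ℝ) = t * (t + 1) / 2 := by
  induction t with
  | zero => simp
  | succ t ih =>
    rw [sum_Icc_succ_top (by omega), ih]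
    push_cast
    ring

section ExpandGens

variable {Γ : Type*} [AddCommGroup Γ] [Fintype Γ] [DecidableEq Γ]

theorem condSet_expandGens (p : ℕ) (S : Multiset Γ) (Q : Finset Γ) :
    condSet (expandGens p S) Q =
      (∑ k ∈ Icc 1 ((p - 1) / 2), condSet (S.map (k • ·)) Q) / ((p - 1) / 2 : ℕ) := by
  rw [expandGens, condSet_bind _ _ (fun k _ => Multiset.card_map _ S), Nat.card_Icc,
    Nat.add_sub_cancel]

theorem condGraph_le_condGraph_expandGens {p : ℕ} (hp : 3 ≤ p) (hΓ : 2 ≤ Fintype.card Γ)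
    (hcop : ∀ k ∈ Icc 1 ((p - 1) / 2), (Nat.card Γ).Coprime k) (S : Multiset Γ) :
    condGraph S ≤ condGraph (expandGens p S) := by
  refine le_condGraph _ hΓ fun Q hQ hQΓ => ?_
  have ht : (0 : ℝ) < ((p - 1) / 2 : ℕ) := by norm_cast; omega
  rw [condSet_expandGens, le_div_iff₀ ht]
  calc condGraph S * ((p - 1) / 2 : ℕ) = ∑ k ∈ Icc 1 ((p - 1) / 2), condGraph S := by
        simp [mul_comm]
    _ ≤ ∑ k ∈ Icc 1 ((p - 1) / 2), condSet (S.map (k • ·)) Q := by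
        refine sum_le_sum fun k hk => ?_
        let e : Γ ≃+ Γ :=
          AddEquiv.ofBijective (nsmulAddMonoidHom k) (hcop k hk).nsmul_right_bijective
        rw [show condSet (S.map (k • ·)) Q = condSet (S.map e) Q from rfl,
          condSet_map_addEquiv]
        exact condGraph_le_condSet S (hQ.image _)
          ((card_image_of_injective _ e.symm.injective).symm ▸ hQΓ)

theorem condGraph_expandGens_le {p : ℕ} (hp : 3 ≤ p) (hΓ : 2 ≤ Fintype.card Γ)
    (S : Multiset Γ) :
    condGraph (expandGens p S) ≤ (((p - 1) / 2 : ℕ) + 1) / 2 * condGraph S := by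
  obtain ⟨Q, hQ, hQΓ, hmin⟩ := exists_condSet_eq_condGraph S hΓ
  have ht : (((p - 1) / 2 : ℕ) : ℝ) ≠ 0 := by norm_cast; omega
  calc condGraph (expandGens p S) ≤ condSet (expandGens p S) Q :=
        condGraph_le_condSet _ hQ hQΓ
    _ = (∑ k ∈ Icc 1 ((p - 1) / 2), condSet (S.map (k • ·)) Q) / ((p - 1) / 2 : ℕ) :=
        condSet_expandGens p S Q
    _ ≤ (∑ k ∈ Icc 1 ((p - 1) / 2), (k : ℝ) * condSet S Q) / ((p - 1) / 2 : ℕ) := by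
        gcongr with k
        exact condSet_map_nsmul_le k S Q
    _ = (((p - 1) / 2 : ℕ) + 1) / 2 * condGraph S := by
        rw [← sum_mul, sum_Icc_one_natCast, hmin]
        field_simp

end ExpandGens

theorem conductance_comparison_expanded_generators_general
    (p : ℕ) [NeZero p] (hp : p.Prime) (hodd : Odd p) (m : ℕ) (hm : 1 ≤ m)
    (S : Multiset (Fin m → ZMod p)) :
    condGraph S ≤ condGraph (expandGens p S) ∧
      condGraph (expandGens p S) ≤ ((p : ℝ) + 1) / 4 * condGraph S := by
  have hp3 : 3 ≤ p := by
    obtain ⟨c, rfl⟩ := hodd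
    have := hp.two_le
    omega
  have hcard : Fintype.card (Fin m → ZMod p) = p ^ m := by simp
  have hΓ : 2 ≤ Fintype.card (Fin m → ZMod p) :=
    hcard ▸ hp.two_le.trans (Nat.le_self_pow (by omega) p)
  refine ⟨condGraph_le_condGraph_expandGens hp3 hΓ (fun k hk => ?_) S, ?_⟩
  · rw [mem_Icc] at hk
    rw [Nat.card_eq_fintype_card, hcard]
    exact Nat.Coprime.pow_left m
      (hp.coprime_iff_not_dvd.2 (Nat.not_dvd_of_pos_of_lt (by omega) (by omega)))
  · convert condGraph_expandGens_le hp3 hΓ S using 2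
    obtain ⟨c, rfl⟩ := hodd
    simp only [Nat.add_sub_cancel, Nat.mul_div_cancel_left c two_pos]
    push_cast
    ring

/-- Let `p` be an odd prime, `m ≥ 1`, and `S` a nonempty symmetric
multiset of elements of `(ℤ/pℤ)^m`. With `G = Cay((ℤ/pℤ)^m, S)` and
`G' = Cay((ℤ/pℤ)^m, S')` where `S' = ⋃_{k=1}^{(p−1)/2} kS`, one has
`φ(G) ≤ φ(G') ≤ ((p+1)/4)·φ(G)`. -/
theorem conductance_comparison_expanded_generators
    (p : ℕ) [NeZero p] (hp : p.Prime) (hodd : Odd p) (m : ℕ) (hm : 1 ≤ m)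
    (S : Multiset (Fin m → ZMod p)) (hS : S ≠ 0)
    (hsym : ∀ x : Fin m → ZMod p, S.count (-x) = S.count x) :
    condGraph S ≤ condGraph (expandGens p S) ∧
      condGraph (expandGens p S) ≤ ((p : ℝ) + 1) / 4 * condGraph S :=
  conductance_comparison_expanded_generators_general p hp hodd m hm S
end
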